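/- Define f₃(z) = ∑_{k=1}^∞ z^k / k^{k+1}. Then f₃ is entire, and for all z ∈ ℂ, f₃(z) = ∫₀^∞ (1+u)^{-1} G(ln(1+u)) [exp(z e^{-1}/(1+u)) − 1] du, where G(p) = s₂'(1+p) − s₁'(1+p) and s₁, s₂ are the two inverse branches of s − ln s. -/

import Mathlib

/-!
Since `x ^ k * exp (-k x) = exp (-k (x - log x))`, splitting the Gamma integral
`∫₀^∞ x ^ k * exp (-k x) dx = k! / k ^ (k + 1)` at `x = 1` and substituting `x = sᵢ (1 + p)` on the
two halves gives `k! / k ^ (k + 1) = ∫₀^∞ G p * exp (-k (1 + p)) dp`, where `G ≥ 0` because `s₂`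
increases and `s₁` decreases. Expanding `exp (z * exp (-(1 + p))) - 1` in powers of `z` and
integrating term by term (legitimate as `G ≥ 0` and `k! ≤ k ^ (k + 1)`) produces the series of
`f₃`, and `u = exp p - 1` turns the integral into the stated one. The same bound
`k! ≤ k ^ (k + 1)` makes the series converge locally uniformly, so `f₃` is entire.
-/

open MeasureTheory Set Real Filter Topology
open scoped Nat

namespace Set.RightInvOn

variable {α β : Type*} {g : β → α} {f : α → β} {U : Set β} {S : Set α}

theorem image_eq_of_injOn (h : RightInvOn g f U) (hg : MapsTo g U S) (hf : MapsTo f S U)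
    (hinj : InjOn f S) : g '' U = S :=
  (InvOn.bijOn ⟨h, fun _ hx => hinj (hg (hf hx)) hx (h (hf hx))⟩ hg hf).image_eq

variable [LinearOrder α] [Preorder β]

theorem strictMonoOn (h : RightInvOn g f U) (hg : MapsTo g U S) (hf : MonotoneOn f S) :
    StrictMonoOn g U := by
  intro a ha b hb hab
  by_contra! hba
  exact hab.not_ge (h ha ▸ h hb ▸ hf (hg hb) (hg ha) hba)

theorem strictAntiOn (h : RightInvOn g f U) (hg : MapsTo g U S) (hf : AntitoneOn f S) :
    StrictAntiOn g U := by
  intro a ha b hb hab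
  by_contra! hba
  exact hab.not_ge (h ha ▸ h hb ▸ hf (hg ha) (hg hb) hba)

end Set.RightInvOn

theorem StrictAntiOn.continuousAt_of_image_mem_nhds {α β : Type*} [LinearOrder α]
    [TopologicalSpace α] [OrderTopology α] [LinearOrder β] [TopologicalSpace β] [OrderTopology β]
    [DenselyOrdered β] {f : α → β} {s : Set α} {a : α} (h : StrictAntiOn f s) (hs : s ∈ 𝓝 a)
    (hfs : f '' s ∈ 𝓝 (f a)) : ContinuousAt f a :=
  h.dual_right.continuousAt_of_image_mem_nhds hs hfs

namespace Real

lemma one_lt_sub_log {x : ℝ} (hx : 0 < x) (hx1 : x ≠ 1) : 1 < x - log x := by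
  linarith [log_lt_sub_one_of_pos hx hx1]

lemma strictMonoOn_sub_log : StrictMonoOn (fun x => x - log x) (Ici 1) := by
  intro a (ha : 1 ≤ a) b _ hab
  have ha0 : 0 < a := by linarith
  have hb0 : 0 < b := by linarith
  have hlog : log (b / a) < b / a - 1 :=
    log_lt_sub_one_of_pos (by positivity) (by rw [Ne, div_eq_one_iff_eq ha0.ne']; exact hab.ne')
  have hle : (b - a) / a ≤ b - a := div_le_self (by linarith) ha
  rw [log_div hb0.ne' ha0.ne', div_sub_one ha0.ne'] at hlog
  dsimp only
  linarith

lemma strictAntiOn_sub_log : StrictAntiOn (fun x => x - log x) (Ioc 0 1) := by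
  intro a ⟨ha0, _⟩ b ⟨hb0, (hb : b ≤ 1)⟩ hab
  have hlog : log (a / b) < a / b - 1 :=
    log_lt_sub_one_of_pos (by positivity) (by rw [Ne, div_eq_one_iff_eq hb0.ne']; exact hab.ne)
  have hle : b - a ≤ (b - a) / b := le_div_self (by linarith) hb0 hb
  rw [log_div ha0.ne' hb0.ne', div_sub_one hb0.ne'] at hlog
  dsimp only
  linarith [show (a - b) / b = -((b - a) / b) by ring]

lemma hasDerivAt_sub_log {x : ℝ} (hx : x ≠ 0) : HasDerivAt (fun x => x - log x) (1 - x⁻¹) x :=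
  (hasDerivAt_id x).sub (hasDerivAt_log hx)

lemma mul_exp_neg_eq_exp_neg_sub_log {x : ℝ} (hx : 0 < x) : x * exp (-x) = exp (-(x - log x)) := by
  rw [neg_sub, exp_sub, exp_log hx, exp_neg, div_eq_mul_inv]

lemma integral_mul_exp_neg_pow {k : ℕ} (hk : 0 < k) :
    ∫ x in Ioi (0 : ℝ), (x * exp (-x)) ^ k = k ! / (k : ℝ) ^ (k + 1) := by
  have h := integral_rpow_mul_exp_neg_mul_Ioi (a := k + 1) (r := k) (by positivity)
    (by exact_mod_cast hk)
  simp only [add_sub_cancel_right, rpow_natCast] at h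
  simp only [mul_pow, ← exp_nat_mul, mul_neg]
  rw [h, Gamma_nat_eq_factorial, ← Nat.cast_add_one, rpow_natCast, div_pow, one_pow,
    one_div_mul_eq_div]

lemma integrableOn_mul_exp_neg_pow {k : ℕ} (hk : 0 < k) :
    IntegrableOn (fun x => (x * exp (-x)) ^ k) (Ioi 0) :=
  Integrable.of_integral_ne_zero (by rw [integral_mul_exp_neg_pow hk]; positivity)

end Real

lemma ne_one_of_rightInvOn_sub_log {s : ℝ → ℝ} (hs : RightInvOn s (fun x => x - log x) (Ioi 1))
    {t : ℝ} (ht : t ∈ Ioi 1) : s t ≠ 1 := fun h => by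
  have := hs ht
  simp only [h, log_one, sub_zero] at this
  exact ht.ne this

lemma hasDerivAt_of_rightInvOn_sub_log {s : ℝ → ℝ}
    (hs : RightInvOn s (fun x => x - log x) (Ioi 1)) {t : ℝ} (ht : 1 < t) (hpos : 0 < s t)
    (hcont : ContinuousAt s t) : HasDerivAt s (1 - (s t)⁻¹)⁻¹ t := by
  refine .of_local_left_inverse hcont (hasDerivAt_sub_log hpos.ne') ?_
    (eventually_of_mem (Ioi_mem_nhds ht) fun _ hu => hs hu)
  rw [sub_ne_zero, ne_comm, inv_ne_one]
  exact ne_one_of_rightInvOn_sub_log hs ht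

lemma image_comp_one_add_Ioi_zero (s : ℝ → ℝ) : (fun p => s (1 + p)) '' Ioi 0 = s '' Ioi 1 := by
  rw [← image_image, image_const_add_Ioi, add_zero]

section Branch

variable {s : ℝ → ℝ} {S : Set ℝ} (hs : RightInvOn s (fun x => x - log x) (Ioi 1))
  (hS : s '' Ioi 1 = S) (hS₀ : S ⊆ Ioi 0) (hd : ∀ t ∈ Ioi 1, DifferentiableAt ℝ s t)

include hs in
lemma injOn_comp_one_add : InjOn (fun p => s (1 + p)) (Ioi 0) :=
  hs.injOn.comp (add_right_injective 1).injOn fun p hp => by simpa using hp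

include hd in
lemma hasDerivWithinAt_comp_one_add :
    ∀ p ∈ Ioi (0 : ℝ), HasDerivWithinAt (fun p => s (1 + p)) (deriv s (1 + p)) (Ioi 0) p :=
  fun p hp => ((hd (1 + p) (by simpa using hp)).hasDerivAt.comp_const_add 1 p).hasDerivWithinAt

include hs hS hS₀ in
lemma eqOn_abs_deriv_smul_mul_exp_neg_pow (k : ℕ) :
    EqOn (fun p => |deriv s (1 + p)| • (s (1 + p) * exp (-s (1 + p))) ^ k)
      (fun p => |deriv s (1 + p)| * exp (-(1 + p)) ^ k) (Ioi 0) := by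
  intro p hp
  have ht : 1 + p ∈ Ioi 1 := by simpa using hp
  have hpos : 0 < s (1 + p) := hS₀ (hS ▸ mem_image_of_mem s ht)
  simp only [smul_eq_mul, mul_exp_neg_eq_exp_neg_sub_log hpos, hs ht]

include hs hS hS₀ hd in
lemma integrableOn_abs_deriv_mul_exp_neg_pow {k : ℕ} (hk : 0 < k) :
    IntegrableOn (fun p => |deriv s (1 + p)| * exp (-(1 + p)) ^ k) (Ioi 0) := by
  refine (integrableOn_congr_fun (eqOn_abs_deriv_smul_mul_exp_neg_pow hs hS hS₀ k)
    measurableSet_Ioi).1 ?_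
  refine (integrableOn_image_iff_integrableOn_abs_deriv_smul measurableSet_Ioi
    (hasDerivWithinAt_comp_one_add hd) (injOn_comp_one_add hs) (fun x => (x * exp (-x)) ^ k)).1 ?_
  rw [image_comp_one_add_Ioi_zero, hS]
  exact (integrableOn_mul_exp_neg_pow hk).mono_set hS₀

include hs hS hS₀ hd in
lemma integral_abs_deriv_mul_exp_neg_pow (k : ℕ) :
    ∫ p in Ioi 0, |deriv s (1 + p)| * exp (-(1 + p)) ^ k = ∫ x in S, (x * exp (-x)) ^ k := by
  rw [← hS, ← image_comp_one_add_Ioi_zero, integral_image_eq_integral_abs_deriv_smul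
    measurableSet_Ioi (hasDerivWithinAt_comp_one_add hd) (injOn_comp_one_add hs)]
  exact (setIntegral_congr_fun measurableSet_Ioi
    (eqOn_abs_deriv_smul_mul_exp_neg_pow hs hS hS₀ k)).symm

end Branch

lemma Complex.hasSum_pow_succ_div_factorial (z : ℂ) :
    HasSum (fun n : ℕ => z ^ (n + 1) / (n + 1)!) (Complex.exp z - 1) := by
  have h := NormedSpace.expSeries_div_hasSum_exp z
  rw [← Complex.exp_eq_exp_ℂ, ← hasSum_nat_add_iff' 1] at h
  simpa using h

theorem integral_mul_cexp_mul_sub_one_eq_tsum {α : Type*} [MeasurableSpace α] {μ : Measure α}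
    {g w : α → ℝ} (hg : 0 ≤ᵐ[μ] g) (hw : 0 ≤ w)
    (hint : ∀ n : ℕ, Integrable (fun x => g x * w x ^ (n + 1)) μ) (z : ℂ)
    (hsum : Summable fun n : ℕ => (∫ x, g x * w x ^ (n + 1) ∂μ) * ‖z‖ ^ (n + 1) / (n + 1)!) :
    ∫ x, (g x : ℂ) * (Complex.exp (z * w x) - 1) ∂μ =
      ∑' n : ℕ, (∫ x, g x * w x ^ (n + 1) ∂μ : ℝ) * z ^ (n + 1) / (n + 1)! := by
  set F : ℕ → α → ℂ := fun n x => (g x * w x ^ (n + 1) : ℝ) • (z ^ (n + 1) / (n + 1)!)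
  have hF : ∀ x, (g x : ℂ) * (Complex.exp (z * w x) - 1) = ∑' n, F n x := fun x => by
    refine (((Complex.hasSum_pow_succ_div_factorial (z * w x)).mul_left (g x : ℂ)).congr_fun
      fun n => ?_).tsum_eq.symm
    simp only [F, Complex.real_smul]
    push_cast
    ring
  have hnorm : ∀ n, ∫ x, ‖F n x‖ ∂μ = (∫ x, g x * w x ^ (n + 1) ∂μ) * ‖z‖ ^ (n + 1) / (n + 1)! :=
    fun n => by
    rw [mul_div_assoc, ← integral_mul_const]
    refine integral_congr_ae (hg.mono fun x hx => ?_)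
    simp only [F, norm_smul, norm_div, norm_pow, Real.norm_eq_abs, Complex.norm_natCast,
      abs_of_nonneg (mul_nonneg hx (pow_nonneg (hw x) _))]
  rw [integral_congr_ae (Eventually.of_forall hF), ← integral_tsum_of_summable_integral_norm
    (fun n => (hint n).smul_const _) (hsum.congr fun n => (hnorm n).symm)]
  refine tsum_congr fun n => ?_
  rw [integral_smul_const, Complex.real_smul, mul_div_assoc]

theorem integral_Ioi_inv_one_add_smul_comp_log {E : Type*} [NormedAddCommGroup E]
    [NormedSpace ℝ E] (F : ℝ → E) :
    ∫ u in Ioi 0, (1 + u)⁻¹ • F (log (1 + u)) = ∫ p in Ioi 0, F p := by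
  have himage : (fun p => exp p - 1) '' Ioi 0 = Ioi 0 := by
    rw [← image_image (· - 1) exp, image_exp_Ioi, image_sub_const_Ioi, exp_zero, sub_self]
  nth_rw 1 [← himage]
  rw [integral_image_eq_integral_abs_deriv_smul measurableSet_Ioi
    (fun p _ => ((hasDerivAt_exp p).sub_const 1).hasDerivWithinAt)
    (sub_left_injective.comp exp_injective).injOn]
  refine setIntegral_congr_fun measurableSet_Ioi fun p _ => ?_
  simp [smul_smul, abs_of_pos (exp_pos p), (exp_pos p).ne']

lemma Nat.succ_factorial_le_pow (n : ℕ) : (n + 1)! ≤ (n + 1) ^ (n + 2) :=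
  (Nat.factorial_le_pow _).trans (Nat.pow_le_pow_right n.succ_pos (by omega))

lemma norm_pow_succ_div_pow_le (w : ℂ) (k : ℕ) :
    ‖w ^ (k + 1) / ((k : ℂ) + 1) ^ (k + 2)‖ ≤ ‖w‖ ^ (k + 1) / (k + 1)! := by
  rw [norm_div, norm_pow, norm_pow, ← Nat.cast_add_one, Complex.norm_natCast]
  gcongr
  exact_mod_cast Nat.succ_factorial_le_pow k

theorem differentiable_tsum_pow_succ_div_pow :
    Differentiable ℂ fun z : ℂ => ∑' k : ℕ, z ^ (k + 1) / ((k : ℂ) + 1) ^ (k + 2) := by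
  intro z
  have hz : z ∈ Metric.ball (0 : ℂ) (‖z‖ + 1) := by simp
  refine (Complex.differentiableOn_tsum_of_summable_norm
    ((Real.summable_pow_div_factorial (‖z‖ + 1)).comp_injective (add_left_injective 1))
    (fun k => (differentiable_id.pow _).div_const _ |>.differentiableOn) Metric.isOpen_ball
    fun k w hw => ?_).differentiableAt (Metric.isOpen_ball.mem_nhds hz)
  refine (norm_pow_succ_div_pow_le w k).trans ?_
  simp only [Function.comp_apply]
  gcongr
  exact (mem_ball_zero_iff.1 hw).le

section SubLogBranches

variable {s₁ s₂ : ℝ → ℝ}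
  (h₁ : RightInvOn s₁ (fun x => x - log x) (Ioi 1)) (h₁' : MapsTo s₁ (Ioi 1) (Ioo 0 1))
  (h₂ : RightInvOn s₂ (fun x => x - log x) (Ioi 1)) (h₂' : MapsTo s₂ (Ioi 1) (Ioi 1))

include h₁ h₁' in
lemma image_lowerBranch : s₁ '' Ioi 1 = Ioo 0 1 :=
  h₁.image_eq_of_injOn h₁' (fun _ hx => one_lt_sub_log hx.1 hx.2.ne)
    (strictAntiOn_sub_log.injOn.mono Ioo_subset_Ioc_self)

include h₂ h₂' in
lemma image_upperBranch : s₂ '' Ioi 1 = Ioi 1 :=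
  h₂.image_eq_of_injOn h₂' (fun _ (hx : 1 < _) => one_lt_sub_log (by linarith) hx.ne')
    (strictMonoOn_sub_log.injOn.mono Ioi_subset_Ici_self)

include h₁ h₁' in
lemma hasDerivAt_lowerBranch {t : ℝ} (ht : 1 < t) : HasDerivAt s₁ (1 - (s₁ t)⁻¹)⁻¹ t := by
  refine hasDerivAt_of_rightInvOn_sub_log h₁ ht (h₁' ht).1 ?_
  refine (h₁.strictAntiOn h₁' (strictAntiOn_sub_log.antitoneOn.mono Ioo_subset_Ioc_self))
    |>.continuousAt_of_image_mem_nhds (Ioi_mem_nhds ht) ?_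
  rw [image_lowerBranch h₁ h₁']
  exact Ioo_mem_nhds (h₁' ht).1 (h₁' ht).2

include h₂ h₂' in
lemma hasDerivAt_upperBranch {t : ℝ} (ht : 1 < t) : HasDerivAt s₂ (1 - (s₂ t)⁻¹)⁻¹ t := by
  refine hasDerivAt_of_rightInvOn_sub_log h₂ ht (zero_lt_one.trans (h₂' ht)) ?_
  refine (h₂.strictMonoOn h₂' (strictMonoOn_sub_log.monotoneOn.mono Ioi_subset_Ici_self))
    |>.continuousAt_of_image_mem_nhds (Ioi_mem_nhds ht) ?_
  rw [image_upperBranch h₂ h₂']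
  exact Ioi_mem_nhds (h₂' ht)

include h₁ h₁' h₂ h₂' in
lemma deriv_upperBranch_sub_deriv_lowerBranch {t : ℝ} (ht : 1 < t) :
    deriv s₂ t - deriv s₁ t = |deriv s₂ t| + |deriv s₁ t| := by
  have hlt₁ : 1 < (s₁ t)⁻¹ := (one_lt_inv₀ (h₁' ht).1).2 (h₁' ht).2
  have hlt₂ : (s₂ t)⁻¹ < 1 := inv_lt_one_of_one_lt₀ (h₂' ht)
  rw [(hasDerivAt_lowerBranch h₁ h₁' ht).deriv, (hasDerivAt_upperBranch h₂ h₂' ht).deriv,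
    abs_of_pos (inv_pos.2 (by linarith)), abs_of_neg (inv_lt_zero.2 (by linarith))]
  ring

include h₁ h₁' h₂ h₂' in
lemma eqOn_deriv_sub_mul_exp_neg_pow (k : ℕ) :
    EqOn (fun p => (deriv s₂ (1 + p) - deriv s₁ (1 + p)) * exp (-(1 + p)) ^ k)
      (fun p => |deriv s₁ (1 + p)| * exp (-(1 + p)) ^ k +
        |deriv s₂ (1 + p)| * exp (-(1 + p)) ^ k) (Ioi 0) := by
  intro p (hp : 0 < p)
  simp only [deriv_upperBranch_sub_deriv_lowerBranch h₁ h₁' h₂ h₂' (by linarith : 1 < 1 + p)]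
  ring

include h₁ h₁' h₂ h₂' in
lemma integrableOn_and_integral_deriv_sub_mul_exp_neg_pow {k : ℕ} (hk : 0 < k) :
    IntegrableOn (fun p => (deriv s₂ (1 + p) - deriv s₁ (1 + p)) * exp (-(1 + p)) ^ k)
      (Ioi 0) ∧
    ∫ p in Ioi 0, (deriv s₂ (1 + p) - deriv s₁ (1 + p)) * exp (-(1 + p)) ^ k =
      k ! / (k : ℝ) ^ (k + 1) := by
  have hd₁ : ∀ t ∈ Ioi 1, DifferentiableAt ℝ s₁ t := fun _ ht =>
    (hasDerivAt_lowerBranch h₁ h₁' ht).differentiableAt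
  have hd₂ : ∀ t ∈ Ioi 1, DifferentiableAt ℝ s₂ t := fun _ ht =>
    (hasDerivAt_upperBranch h₂ h₂' ht).differentiableAt
  have hS₁ := image_lowerBranch h₁ h₁'
  have hS₂ := image_upperBranch h₂ h₂'
  have hI₁ := integrableOn_abs_deriv_mul_exp_neg_pow h₁ hS₁ Ioo_subset_Ioi_self hd₁ hk
  have hI₂ := integrableOn_abs_deriv_mul_exp_neg_pow h₂ hS₂ (Ioi_subset_Ioi zero_le_one) hd₂ hk
  have heq := eqOn_deriv_sub_mul_exp_neg_pow h₁ h₁' h₂ h₂' k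
  have hint := integrableOn_mul_exp_neg_pow hk
  refine ⟨(hI₁.add hI₂).congr_fun heq.symm measurableSet_Ioi, ?_⟩
  rw [setIntegral_congr_fun measurableSet_Ioi heq, integral_add hI₁ hI₂,
    integral_abs_deriv_mul_exp_neg_pow h₁ hS₁ Ioo_subset_Ioi_self hd₁,
    integral_abs_deriv_mul_exp_neg_pow h₂ hS₂ (Ioi_subset_Ioi zero_le_one) hd₂,
    ← integral_Ioc_eq_integral_Ioo, ← setIntegral_union Ioc_disjoint_Ioi_same measurableSet_Ioi
      (hint.mono_set Ioc_subset_Ioi_self) (hint.mono_set (Ioi_subset_Ioi zero_le_one)),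
    Ioc_union_Ioi_eq_Ioi zero_le_one, integral_mul_exp_neg_pow hk]

include h₁ h₁' h₂ h₂' in
lemma integral_deriv_sub_mul_cexp_sub_one (z : ℂ) :
    ∫ p in Ioi 0, ((deriv s₂ (1 + p) - deriv s₁ (1 + p) : ℝ) : ℂ) *
        (Complex.exp (z * exp (-(1 + p))) - 1) =
      ∑' k : ℕ, z ^ (k + 1) / ((k : ℂ) + 1) ^ (k + 2) := by
  have hkey := fun n : ℕ =>
    integrableOn_and_integral_deriv_sub_mul_exp_neg_pow h₁ h₁' h₂ h₂' n.add_one_pos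
  have hnonneg : ∀ᵐ p ∂volume.restrict (Ioi 0), 0 ≤ deriv s₂ (1 + p) - deriv s₁ (1 + p) :=
    (ae_restrict_iff' measurableSet_Ioi).2 <| Eventually.of_forall fun p (hp : 0 < p) => by
      rw [deriv_upperBranch_sub_deriv_lowerBranch h₁ h₁' h₂ h₂' (by linarith)]
      positivity
  have hcoeff : ∀ n : ℕ, ((n + 1)! : ℝ) / ((n + 1 : ℕ) : ℝ) ^ (n + 1 + 1) ≤ 1 := fun n => by
    rw [div_le_one (by positivity)]
    exact_mod_cast Nat.succ_factorial_le_pow n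
  have hsum : Summable fun n : ℕ =>
      (∫ p in Ioi 0, (deriv s₂ (1 + p) - deriv s₁ (1 + p)) * exp (-(1 + p)) ^ (n + 1)) *
        ‖z‖ ^ (n + 1) / (n + 1)! := by
    refine .of_nonneg_of_le (fun n => ?_) (fun n => ?_)
      ((Real.summable_pow_div_factorial ‖z‖).comp_injective (add_left_injective 1))
    · rw [(hkey n).2]
      positivity
    · rw [(hkey n).2, mul_div_assoc]
      exact mul_le_of_le_one_left (by positivity) (hcoeff n)
  rw [integral_mul_cexp_mul_sub_one_eq_tsum hnonneg (fun p => (exp_pos _).le)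
    (fun n => (hkey n).1) z hsum]
  refine tsum_congr fun n => ?_
  have hfac : ((n + 1)! : ℂ) ≠ 0 := by exact_mod_cast (n + 1).factorial_ne_zero
  rw [(hkey n).2]
  push_cast
  field_simp

end SubLogBranches

theorem stmt13 (s₁ s₂ : ℝ → ℝ)
    (h₁ : ∀ t ∈ Ici (1 : ℝ), s₁ t ∈ Ioc (0 : ℝ) 1 ∧ s₁ t - Real.log (s₁ t) = t)
    (h₂ : ∀ t ∈ Ici (1 : ℝ), s₂ t ∈ Ici (1 : ℝ) ∧ s₂ t - Real.log (s₂ t) = t)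
    (G : ℝ → ℝ) (hG : ∀ p, G p = deriv s₂ (1 + p) - deriv s₁ (1 + p))
    (f₃ : ℂ → ℂ)
    (hf : ∀ z : ℂ, f₃ z = ∑' k : ℕ, z ^ (k + 1) / (((k : ℂ) + 1) ^ (k + 2))) :
    Differentiable ℂ f₃ ∧
    ∀ z : ℂ, f₃ z =
      ∫ u in Ioi (0 : ℝ),
        (((1 + u)⁻¹ * G (Real.log (1 + u)) : ℝ) : ℂ) *
          (Complex.exp (z * (Real.exp (-1) : ℝ) / ((1 + u : ℝ) : ℂ)) - 1) := by
  have hinv₁ : RightInvOn s₁ (fun x => x - log x) (Ioi 1) := fun t ht =>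
    (h₁ t (mem_Ici_of_Ioi ht)).2
  have hinv₂ : RightInvOn s₂ (fun x => x - log x) (Ioi 1) := fun t ht =>
    (h₂ t (mem_Ici_of_Ioi ht)).2
  have hmaps₁ : MapsTo s₁ (Ioi 1) (Ioo 0 1) := fun t ht =>
    have hmem := (h₁ t (mem_Ici_of_Ioi ht)).1
    ⟨hmem.1, hmem.2.lt_of_ne (ne_one_of_rightInvOn_sub_log hinv₁ ht)⟩
  have hmaps₂ : MapsTo s₂ (Ioi 1) (Ioi 1) := fun t ht =>
    (h₂ t (mem_Ici_of_Ioi ht)).1.lt_of_ne' (ne_one_of_rightInvOn_sub_log hinv₂ ht)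
  refine ⟨funext hf ▸ differentiable_tsum_pow_succ_div_pow, fun z => ?_⟩
  rw [hf, ← integral_deriv_sub_mul_cexp_sub_one hinv₁ hmaps₁ hinv₂ hmaps₂ z,
    ← integral_Ioi_inv_one_add_smul_comp_log]
  refine setIntegral_congr_fun measurableSet_Ioi fun u (hu : 0 < u) => ?_
  have hexp : exp (-(1 + log (1 + u))) = exp (-1) / (1 + u) := by
    rw [neg_add, exp_add, exp_neg (log _), exp_log (by linarith), div_eq_mul_inv]
  simp only [← hG, hexp, Complex.real_smul]
  push_cast
  rw [mul_div_assoc, mul_assoc]
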